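/- arXiv:2504.07283 — 2 statements merged into one kernel-verified Lean document; each statement's English description precedes it below -/
import Mathlib

section
/- For any nonzero real number R₊, there is no function g : ℝ × ℝ → ℝ such that for every n ∈ ℕ and every finite state sequence s : Fin (n+2) → ℝ, the progress reward at the final step — defined as R₊ if s(n+1) < min_{i ≤ n} s(i) and 0 otherwise — equals g(s(n), s(n+1)). In other words, the progress reward cannot be written as a function of only the current and next state, so it is non-Markovian on the original state space. -/
/-!
Appending the state `0` to the history `1` strictly lowers the running minimum, while appending it
to the history `-1, 1` does not; both transitions go from `1` to `0`, so a function of the last two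
states would have to take both values `R` and `0` at `(1, 0)`.
-/

noncomputable def progressReward (R : ℝ) {n : ℕ} (s : Fin (n + 2) → ℝ) : ℝ :=
  if s (Fin.last (n + 1)) <
      Finset.univ.inf' Finset.univ_nonempty (fun i : Fin (n + 1) => s i.castSucc)
    then R else 0

def lastTransition {n : ℕ} (s : Fin (n + 2) → ℝ) : ℝ × ℝ :=
  (s (Fin.castSucc (Fin.last n)), s (Fin.last (n + 1)))

theorem not_exists_markov_reward_of_lastTransition_eq {R : ℝ} {m n : ℕ}
    {s : Fin (m + 2) → ℝ} {t : Fin (n + 2) → ℝ} (hst : lastTransition s = lastTransition t)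
    (hR : progressReward R s ≠ progressReward R t) :
    ¬ ∃ g : ℝ × ℝ → ℝ, ∀ (k : ℕ) (u : Fin (k + 2) → ℝ),
      progressReward R u = g (lastTransition u) := by
  rintro ⟨g, hg⟩
  exact hR (by rw [hg, hg, hst])

theorem progressReward_one_zero (R : ℝ) : progressReward R ![1, 0] = R := by
  simp [progressReward, Fin.last]

theorem progressReward_neg_one_one_zero (R : ℝ) : progressReward R ![-1, 1, 0] = 0 := by
  have hmin : Finset.univ.inf' Finset.univ_nonempty
      (fun i : Fin 2 => (![-1, 1, 0] : Fin 3 → ℝ) i.castSucc) ≤ -1 :=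
    Finset.inf'_le _ (Finset.mem_univ 0)
  refine if_neg (not_lt.mpr (hmin.trans ?_))
  simp [Fin.last]

/-- Non-Markovianity of the progress reward on the original state space:
for any nonzero bonus `R`, no function `g` of only the current and next state
can reproduce the reward "`R` if the new state strictly decreases the running
minimum of the history, `0` otherwise". -/
theorem stmt0 (R : ℝ) (hR : R ≠ 0) :
    ¬ ∃ g : ℝ × ℝ → ℝ, ∀ (n : ℕ) (s : Fin (n + 2) → ℝ),
      (if s (Fin.last (n + 1)) <
          Finset.univ.inf' Finset.univ_nonempty (fun i : Fin (n + 1) => s i.castSucc)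
        then R else 0)
        = g (s (Fin.castSucc (Fin.last n)), s (Fin.last (n + 1))) := by
  refine not_exists_markov_reward_of_lastTransition_eq (s := ![1, 0]) (t := ![-1, 1, 0]) ?_ ?_
  · simp [lastTransition, Fin.last]
  · rw [progressReward_one_zero, progressReward_neg_one_one_zero]
    exact hR
end

section
/- Let S be a type, Φ : S → ℝ a bounded function (|Φ(x)| ≤ B for all x), γ ∈ ℝ with 0 < γ < 1, s : ℕ → S a trajectory, and r : ℕ → ℝ a bounded reward sequence (|r t| ≤ C for all t). Then both series ∑_{t=0}^∞ γ^t · r t and ∑_{t=0}^∞ γ^t · (r t + γ·Φ(s (t+1)) − Φ(s t)) converge, and the shaped discounted return equals the original discounted return minus Φ(s 0): ∑_{t=0}^∞ γ^t · (r t + γ·Φ(s (t+1)) − Φ(s t)) = ∑_{t=0}^∞ γ^t · r t − Φ(s 0). -/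
/-! The discounted potentials `γ ^ t * Φ (s t)` form a summable sequence, so the shaping terms
`γ ^ (t + 1) * Φ (s (t + 1)) - γ ^ t * Φ (s t)` telescope to `-Φ (s 0)`. -/

theorem hasSum_succ_sub {G : Type*} [AddCommGroup G] [TopologicalSpace G] [IsTopologicalAddGroup G]
    [T2Space G] {f : ℕ → G} (hf : Summable f) :
    HasSum (fun n => f (n + 1) - f n) (-f 0) := by
  have h := ((summable_nat_add_iff 1).mpr hf).hasSum.sub hf.hasSum
  simpa [hf.tsum_eq_zero_add] using h

theorem summable_pow_mul_of_abs_le {γ C : ℝ} (hγ : |γ| < 1) {f : ℕ → ℝ} (hf : ∀ t, |f t| ≤ C) :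
    Summable fun t => γ ^ t * f t :=
  ((summable_geometric_of_lt_one (abs_nonneg γ) hγ).mul_right C).of_norm_bounded fun t => by
    rw [norm_mul, norm_pow, Real.norm_eq_abs, Real.norm_eq_abs]
    exact mul_le_mul_of_nonneg_left (hf t) (by positivity)

/-- Infinite-horizon invariance of potential-based reward shaping: with bounded
potential `Φ`, discount `0 < γ < 1` and bounded rewards, both discounted series
converge and the shaped return equals the original return minus `Φ (s 0)`. -/
theorem stmt4 {S : Type*} (Φ : S → ℝ) (B : ℝ) (hΦ : ∀ x, |Φ x| ≤ B)
    (γ : ℝ) (hγ0 : 0 < γ) (hγ1 : γ < 1)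
    (s : ℕ → S) (r : ℕ → ℝ) (C : ℝ) (hr : ∀ t, |r t| ≤ C) :
    Summable (fun t => γ ^ t * r t) ∧
    Summable (fun t => γ ^ t * (r t + γ * Φ (s (t + 1)) - Φ (s t))) ∧
    ∑' t, γ ^ t * (r t + γ * Φ (s (t + 1)) - Φ (s t))
      = (∑' t, γ ^ t * r t) - Φ (s 0) := by
  have hγ : |γ| < 1 := abs_lt.mpr ⟨by linarith, hγ1⟩
  have hR := summable_pow_mul_of_abs_le hγ hr
  have hPotential : HasSum (fun t => γ ^ (t + 1) * Φ (s (t + 1)) - γ ^ t * Φ (s t)) (-Φ (s 0)) := by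
    simpa using hasSum_succ_sub (summable_pow_mul_of_abs_le hγ fun t => hΦ (s t))
  have hShaped : HasSum (fun t => γ ^ t * (r t + γ * Φ (s (t + 1)) - Φ (s t)))
      ((∑' t, γ ^ t * r t) - Φ (s 0)) := by
    convert hR.hasSum.add hPotential using 1
    · funext t; ring
    · ring
  exact ⟨hR, hShaped.summable, hShaped.tsum_eq⟩
end
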